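/- arXiv:1811.03893 — 2 statements merged into one kernel-verified Lean document; each statement's English description precedes it below -/
import Mathlib

section
/- (Fourth-order Fourier mode constraints.) Let u ∈ W^{1,2}(S¹, ℝ^m) and suppose there exists v ∈ L²(S¹, ℝ^m) whose Fourier coefficients satisfy v̂(n) = |n|·û(n) for all n ∈ ℤ (componentwise), and such that u'(θ) · v(θ) = 0 for almost every θ. Then, with a_k = (1/2π)∫₀^{2π} u(θ) cos(kθ) dθ and b_k = (1/2π)∫₀^{2π} u(θ) sin(kθ) dθ, one has |a₂|² - |b₂|² = (3/2)(b₁ · b₃ - a₁ · a₃) and a₂ · b₂ = -(3/4)(a₁ · b₃ + b₁ · a₃). -/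
open Real MeasureTheory intervalIntegral

/-- The `n`-th Fourier coefficient (of the `i`-th component) of a `2π`-periodic map
`w : ℝ → ℝ^m`, namely `(1/2π) ∫₀^{2π} w_i(θ) e^{-inθ} dθ`. -/
noncomputable def circleFourierCoeff {m : ℕ} (w : ℝ → EuclideanSpace ℝ (Fin m))
    (n : ℤ) (i : Fin m) : ℂ :=
  (1 / (2 * π) : ℂ) * ∫ θ in (0:ℝ)..(2 * π),
    ((w θ i : ℝ) : ℂ) * Complex.exp (-(n : ℂ) * (θ : ℂ) * Complex.I)

/-- The `k`-th cosine Fourier coefficient `a_k = (1/2π) ∫₀^{2π} u(θ) cos(kθ) dθ ∈ ℝ^m`. -/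
noncomputable def cosCoeff {m : ℕ} (u : ℝ → EuclideanSpace ℝ (Fin m)) (k : ℕ) :
    EuclideanSpace ℝ (Fin m) :=
  (1 / (2 * π)) • ∫ θ in (0:ℝ)..(2 * π), Real.cos (k * θ) • u θ

/-- The `k`-th sine Fourier coefficient `b_k = (1/2π) ∫₀^{2π} u(θ) sin(kθ) dθ ∈ ℝ^m`. -/
noncomputable def sinCoeff {m : ℕ} (u : ℝ → EuclideanSpace ℝ (Fin m)) (k : ℕ) :
    EuclideanSpace ℝ (Fin m) :=
  (1 / (2 * π)) • ∫ θ in (0:ℝ)..(2 * π), Real.sin (k * θ) • u θ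

noncomputable section
lemma two_pi_pos' : (0:ℝ) < 2 * π := by positivity
instance fact_two_pi : Fact ((0:ℝ) < 2 * π) := ⟨two_pi_pos'⟩
def fc (w : ℝ → ℂ) (n : ℤ) : ℂ := fourierCoeffOn two_pi_pos' w n

lemma fourier_neg_eq_exp {S : ℝ} (hS : S = 2 * π) (n : ℤ) (x : ℝ) :
    (fourier (-n)) (x : AddCircle S) = Complex.exp (-(n:ℂ) * x * Complex.I) := by
  rw [fourier_coe_apply, hS]
  congr 1
  have hπ : (π:ℂ) ≠ 0 := Complex.ofReal_ne_zero.mpr Real.pi_ne_zero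
  push_cast
  field_simp

lemma fc_eq (w : ℝ → ℂ) (n : ℤ) :
    fc w n = (1 / (2*π) : ℂ) *
      ∫ θ in (0:ℝ)..(2*π), w θ * Complex.exp (-(n:ℂ) * θ * Complex.I) := by
  rw [fc, fourierCoeffOn_eq_integral]
  have h : ∀ θ : ℝ, (fourier (-n)) (θ : AddCircle (2*π - 0)) • w θ
      = w θ * Complex.exp (-(n:ℂ) * θ * Complex.I) := by
    intro θ
    rw [fourier_neg_eq_exp (by ring), smul_eq_mul, mul_comm]
  simp only [h, sub_zero]
  rw [Complex.real_smul]
  congr 1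
  push_cast
  ring

lemma exists_lift (w : ℝ → ℂ) (hw : MemLp w 2 (volume.restrict (Set.Ioc (0:ℝ) (2*π)))) :
    ∃ F : Lp ℂ 2 (@AddCircle.haarAddCircle (2*π) _),
      (∀ n : ℤ, fourierCoeff (⇑F) n = fc w n) ∧
      (fun x : ℝ => (F : AddCircle (2*π) → ℂ) (x : AddCircle (2*π)))
        =ᵐ[volume.restrict (Set.Ioc (0:ℝ) (2*π))] w := by
  have h0 : (0:ℝ) + 2*π = 2*π := zero_add _
  set μr : Measure ℝ := volume.restrict (Set.Ioc (0:ℝ) (2*π)) with hμr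
  have hμr' : μr = volume.restrict (Set.Ioc (0:ℝ) (0 + 2*π)) := by rw [h0]
  set g : ℝ → ℂ := hw.1.mk w with hg
  have hg_sm : StronglyMeasurable g := hw.1.stronglyMeasurable_mk
  have hg_ae : w =ᵐ[μr] g := hw.1.ae_eq_mk
  set W : AddCircle (2*π) → ℂ := AddCircle.liftIoc (2*π) 0 g with hW
  have hWsm : StronglyMeasurable W :=
    (hg_sm.comp_measurable measurable_subtype_coe).comp_measurable
      (AddCircle.measurableEquivIoc (2*π) 0).measurable
  have hmk : MeasurePreserving (((↑) : ℝ → AddCircle (2*π))) μr volume := by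
    rw [hμr']; exact AddCircle.measurePreserving_mk (2*π) 0
  have hcomp : (fun x : ℝ => W (x : AddCircle (2*π))) =ᵐ[μr] w := by
    have h1 : ∀ᵐ x ∂μr, x ∈ Set.Ioc (0:ℝ) (2*π) := ae_restrict_mem measurableSet_Ioc
    filter_upwards [h1, hg_ae] with x hx hgx
    rw [hW, AddCircle.liftIoc_coe_apply (by simpa [h0] using hx), hgx]
  -- MemLp of W
  have hWvol : MemLp W 2 (volume : Measure (AddCircle (2*π))) := by
    rw [← hmk.map_eq]
    rw [memLp_map_measure_iff hWsm.aestronglyMeasurable hmk.measurable.aemeasurable]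
    exact hw.ae_eq hcomp.symm
  have hhaar_eq : (AddCircle.haarAddCircle : Measure (AddCircle (2*π)))
      = (ENNReal.ofReal (2*π))⁻¹ • (volume : Measure (AddCircle (2*π))) := by
    rw [AddCircle.volume_eq_smul_haarAddCircle, smul_smul,
      ENNReal.inv_mul_cancel (ne_of_gt (ENNReal.ofReal_pos.mpr two_pi_pos')) ENNReal.ofReal_ne_top, one_smul]
  have hWhaar : MemLp W 2 (@AddCircle.haarAddCircle (2*π) _) := by
    rw [hhaar_eq]; exact hWvol.smul_measure (by simp [Real.pi_pos])
  refine ⟨hWhaar.toLp W, ?_, ?_⟩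
  · intro n
    have hae : ⇑(hWhaar.toLp W) =ᵐ[AddCircle.haarAddCircle] W := hWhaar.coeFn_toLp
    have h1 : fourierCoeff (⇑(hWhaar.toLp W)) n = fourierCoeff W n := by
      unfold fourierCoeff
      refine integral_congr_ae ?_
      filter_upwards [hae] with t ht
      rw [ht]
    rw [h1, hW, fourierCoeff_liftIoc_eq]
    -- now : fourierCoeffOn _ g n = fc w n
    rw [fc, fourierCoeffOn_eq_integral, fourierCoeffOn_eq_integral]
    have e1 : ∀ x:ℝ, (fourier (-n)) (x : AddCircle (0+2*π-0))
        = Complex.exp (-(n:ℂ) * x * Complex.I) := fun x => fourier_neg_eq_exp (by ring) n x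
    have e2 : ∀ x:ℝ, (fourier (-n)) (x : AddCircle (2*π-0))
        = Complex.exp (-(n:ℂ) * x * Complex.I) := fun x => fourier_neg_eq_exp (by ring) n x
    simp only [e1, e2, smul_eq_mul, zero_add, sub_zero]
    congr 1
    refine intervalIntegral.integral_congr_ae ?_
    have : ∀ᵐ x ∂(volume : Measure ℝ), x ∈ Set.Ioc (0:ℝ) (2*π) → g x = w x := by
      have := (ae_restrict_iff' (μ := (volume : Measure ℝ)) measurableSet_Ioc).mp
        (hg_ae.symm : g =ᵐ[μr] w)
      exact this
    filter_upwards [this] with x hx hx2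
    have hx3 : x ∈ Set.Ioc (0:ℝ) (2*π) := by
      rwa [Set.uIoc_of_le two_pi_pos'.le] at hx2
    rw [hx hx3]
  · have hae : ⇑(hWhaar.toLp W) =ᵐ[AddCircle.haarAddCircle] W := hWhaar.coeFn_toLp
    have hae2 : ⇑(hWhaar.toLp W) =ᶠ[ae (volume : Measure (AddCircle (2*π)))] W := by
      rw [AddCircle.volume_eq_smul_haarAddCircle]
      exact Measure.ae_smul_measure hae _
    have hae3 : (fun x : ℝ => (hWhaar.toLp W : AddCircle (2*π) → ℂ) (x : AddCircle (2*π)))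
        =ᵐ[μr] (fun x : ℝ => W (x : AddCircle (2*π))) := by
      have hae2' : ⇑(hWhaar.toLp W)
          =ᶠ[ae (Measure.map (((↑) : ℝ → AddCircle (2*π))) μr)] W := by
        rw [hmk.map_eq]; exact hae2
      exact ae_eq_comp hmk.measurable.aemeasurable hae2'
    exact hae3.trans hcomp
end

noncomputable section
lemma haar_eq_inv_smul : (AddCircle.haarAddCircle : Measure (AddCircle (2*π)))
    = (ENNReal.ofReal (2*π))⁻¹ • (volume : Measure (AddCircle (2*π))) := by
  rw [AddCircle.volume_eq_smul_haarAddCircle, smul_smul,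
    ENNReal.inv_mul_cancel (ne_of_gt (ENNReal.ofReal_pos.mpr two_pi_pos')) ENNReal.ofReal_ne_top, one_smul]

lemma parseval_hasSum (f g : ℝ → ℂ)
    (hf : MemLp f 2 (volume.restrict (Set.Ioc (0:ℝ) (2*π))))
    (hg : MemLp g 2 (volume.restrict (Set.Ioc (0:ℝ) (2*π)))) :
    HasSum (fun n : ℤ => (starRingEnd ℂ) (fc f n) * fc g n)
      ((1/(2*π) : ℂ) * ∫ x in Set.Ioc (0:ℝ) (2*π), (starRingEnd ℂ) (f x) * g x) := by
  obtain ⟨F, hF1, hF2⟩ := exists_lift f hf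
  obtain ⟨G, hG1, hG2⟩ := exists_lift g hg
  have h1 := (@fourierBasis (2*π) _).hasSum_inner_mul_inner F G
  have h3 : (inner ℂ F G : ℂ)
      = (1/(2*π) : ℂ) * ∫ x in Set.Ioc (0:ℝ) (2*π), (starRingEnd ℂ) (f x) * g x := by
    rw [MeasureTheory.L2.inner_def]
    simp only [RCLike.inner_apply]
    simp only [mul_comm (((G : AddCircle (2*π) → ℂ)) _)]
    have hch : (∫ t, (starRingEnd ℂ) (F t) * G t ∂(AddCircle.haarAddCircle))
        = ∫ t, (starRingEnd ℂ) (F t) * G t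
            ∂((ENNReal.ofReal (2*π))⁻¹ • (volume : Measure (AddCircle (2*π)))) :=
      congrArg (fun μ' => ∫ t, (starRingEnd ℂ) (F t) * G t ∂μ') haar_eq_inv_smul
    rw [hch, MeasureTheory.integral_smul_measure]
    have hpre := AddCircle.integral_preimage (2*π) 0
      (fun t : AddCircle (2*π) => (starRingEnd ℂ) (F t) * G t)
    rw [zero_add] at hpre
    rw [← hpre]
    have hcong : ∫ x in Set.Ioc (0:ℝ) (2*π), (starRingEnd ℂ) (F (x : AddCircle (2*π))) * G x
        = ∫ x in Set.Ioc (0:ℝ) (2*π), (starRingEnd ℂ) (f x) * g x := by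
      refine integral_congr_ae ?_
      filter_upwards [hF2, hG2] with x hx1 hx2
      rw [hx1, hx2]
    rw [hcong, ENNReal.toReal_inv, ENNReal.toReal_ofReal two_pi_pos'.le,
      Complex.real_smul]
    push_cast
    ring
  rw [h3] at h1
  have hfun : (fun n : ℤ => (starRingEnd ℂ) (fc f n) * fc g n)
      = fun i => inner ℂ F (fourierBasis i) * inner ℂ (fourierBasis i) G := by
    funext n
    rw [← hF1 n, ← hG1 n, ← fourierBasis_repr, ← fourierBasis_repr,
      HilbertBasis.repr_apply_apply, HilbertBasis.repr_apply_apply, inner_conj_symm]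
  rw [hfun]
  exact h1
end

noncomputable section

instance : IsFiniteMeasure (volume.restrict (Set.Ioc (0:ℝ) (2*π))) := by
  constructor
  rw [Measure.restrict_apply_univ]
  exact measure_Ioc_lt_top

lemma memLp_mul_bounded {h : ℝ → ℂ} (hh : MemLp h 2 (volume.restrict (Set.Ioc (0:ℝ) (2*π))))
    (c : ℝ → ℂ) (hc : Continuous c) (C : ℝ) (hbd : ∀ x, ‖c x‖ ≤ C) :
    MemLp (fun θ => c θ * h θ) 2 (volume.restrict (Set.Ioc (0:ℝ) (2*π))) := by
  have h1 : MemLp (c • h) 2 (volume.restrict (Set.Ioc (0:ℝ) (2*π))) :=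
    hh.smul
      (memLp_top_of_bound hc.aestronglyMeasurable C (Filter.Eventually.of_forall hbd))
  have h2 : (fun θ => c θ * h θ) = c • h := rfl
  rw [h2]
  exact h1

lemma integrable_mul2 {h1 h2 : ℝ → ℂ}
    (hh1 : MemLp h1 2 (volume.restrict (Set.Ioc (0:ℝ) (2*π))))
    (hh2 : MemLp h2 2 (volume.restrict (Set.Ioc (0:ℝ) (2*π)))) :
    Integrable (fun θ => h1 θ * h2 θ) (volume.restrict (Set.Ioc (0:ℝ) (2*π))) := by
  rw [← memLp_one_iff_integrable]
  have key : MemLp (h1 • h2) 1 (volume.restrict (Set.Ioc (0:ℝ) (2*π))) :=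
    hh2.smul hh1
  have key2 : (fun θ => h1 θ * h2 θ) = h1 • h2 := rfl
  rw [key2]
  exact key

lemma II_mul {h : ℝ → ℂ} (hh : MemLp h 2 (volume.restrict (Set.Ioc (0:ℝ) (2*π))))
    (c : ℝ → ℂ) (hc : Continuous c) (C : ℝ) (hbd : ∀ x, ‖c x‖ ≤ C) :
    IntervalIntegrable (fun θ => c θ * h θ) volume 0 (2*π) := by
  rw [intervalIntegrable_iff_integrableOn_Ioc_of_le two_pi_pos'.le]
  exact memLp_one_iff_integrable.mp
    ((memLp_mul_bounded hh c hc C hbd).mono_exponent (by norm_num))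

lemma II_smul_vec {m : ℕ} {h : ℝ → EuclideanSpace ℝ (Fin m)}
    (hh : MemLp h 2 (volume.restrict (Set.Ioc (0:ℝ) (2*π))))
    (c : ℝ → ℝ) (hc : Continuous c) (C : ℝ) (hbd : ∀ x, |c x| ≤ C) :
    IntervalIntegrable (fun θ => c θ • h θ) volume 0 (2*π) := by
  rw [intervalIntegrable_iff_integrableOn_Ioc_of_le two_pi_pos'.le]
  have h1 : MemLp (c • h) 2 (volume.restrict (Set.Ioc (0:ℝ) (2*π))) :=
    hh.smul
      (memLp_top_of_bound hc.aestronglyMeasurable C (Filter.Eventually.of_forall hbd))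
  have h2 : (fun θ => c θ • h θ) = c • h := rfl
  rw [h2]
  exact memLp_one_iff_integrable.mp (h1.mono_exponent one_le_two)

lemma memLp_comp_proj {m : ℕ} {h : ℝ → EuclideanSpace ℝ (Fin m)}
    (hh : MemLp h 2 (volume.restrict (Set.Ioc (0:ℝ) (2*π)))) (i : Fin m) :
    MemLp (fun θ => ((h θ i : ℝ) : ℂ)) 2 (volume.restrict (Set.Ioc (0:ℝ) (2*π))) :=
  (Complex.ofRealCLM.comp (EuclideanSpace.proj (𝕜 := ℝ) i)).comp_memLp' hh

lemma intervalIntegral_conj2 {f : ℝ → ℂ} :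
    (∫ x in (0:ℝ)..(2*π), (starRingEnd ℂ) (f x)) = (starRingEnd ℂ) (∫ x in (0:ℝ)..(2*π), f x) := by
  rw [intervalIntegral.integral_of_le two_pi_pos'.le,
    intervalIntegral.integral_of_le two_pi_pos'.le, integral_conj]

lemma fc_conj_real (r : ℝ → ℝ) (n : ℤ) :
    (starRingEnd ℂ) (fc (fun θ => ((r θ : ℝ):ℂ)) n) = fc (fun θ => ((r θ:ℝ):ℂ)) (-n) := by
  rw [fc_eq, fc_eq, map_mul, ← intervalIntegral_conj2]
  congr 1
  · simp [map_div₀, map_mul, Complex.conj_ofReal, map_ofNat]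
  · refine intervalIntegral.integral_congr (fun x _ => ?_)
    rw [map_mul, Complex.conj_ofReal, ← Complex.exp_conj]
    congr 1
    simp only [map_mul, map_neg, Complex.conj_I, Complex.conj_ofReal, map_intCast]
    push_cast
    ring

lemma fc_exp_mul (h : ℝ → ℂ) (n k : ℤ) :
    fc (fun θ => Complex.exp (-(k:ℂ) * θ * Complex.I) * h θ) n = fc h (n + k) := by
  rw [fc_eq, fc_eq]
  congr 1
  refine intervalIntegral.integral_congr fun x _ => ?_
  rw [mul_comm (Complex.exp _) (h x), mul_assoc, ← Complex.exp_add]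
  congr 2
  push_cast
  ring

lemma fc_split (r : ℝ → ℝ)
    (hr : MemLp (fun θ => ((r θ:ℝ):ℂ)) 2 (volume.restrict (Set.Ioc (0:ℝ) (2*π)))) (n : ℤ) :
    fc (fun θ => ((r θ:ℝ):ℂ)) n
      = (1/(2*π) : ℂ) * ((((∫ θ in (0:ℝ)..(2*π), Real.cos (n*θ) * r θ) : ℝ) : ℂ)
        - Complex.I * (((∫ θ in (0:ℝ)..(2*π), Real.sin (n*θ) * r θ) : ℝ) : ℂ)) := by
  have hint : ∀ x : ℝ, ((r x:ℝ):ℂ) * Complex.exp (-(n:ℂ)*x*Complex.I)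
      = ((Real.cos (n*x) * r x : ℝ):ℂ) - Complex.I * ((Real.sin (n*x) * r x : ℝ):ℂ) := by
    intro x
    have he : Complex.exp (-(n:ℂ)*x*Complex.I)
        = ((Real.cos ((n:ℝ)*x):ℝ):ℂ) - ((Real.sin ((n:ℝ)*x):ℝ):ℂ) * Complex.I := by
      rw [show (-(n:ℂ)*x*Complex.I) = ((-((n:ℝ)*x):ℝ):ℂ)*Complex.I by push_cast; ring,
        Complex.exp_mul_I, Complex.ofReal_cos, Complex.ofReal_sin]
      rw [Complex.ofReal_neg, Complex.cos_neg, Complex.sin_neg]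
      ring
    rw [he]
    push_cast
    ring
  have hA : IntervalIntegrable (fun x => ((Real.cos (n*x) * r x : ℝ):ℂ)) volume 0 (2*π) := by
    have := II_mul hr (fun x => ((Real.cos (n*x) : ℝ):ℂ))
      (Complex.continuous_ofReal.comp (Real.continuous_cos.comp (by continuity))) 1
      (fun x => by rw [Complex.norm_real, Real.norm_eq_abs]; exact abs_cos_le_one _)
    refine this.congr ?_  -- integrands equal
    refine fun x _ => ?_
    push_cast
    ring
  have hB : IntervalIntegrable (fun x => ((Real.sin (n*x) * r x : ℝ):ℂ)) volume 0 (2*π) := by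
    have := II_mul hr (fun x => ((Real.sin (n*x) : ℝ):ℂ))
      (Complex.continuous_ofReal.comp (Real.continuous_sin.comp (by continuity))) 1
      (fun x => by rw [Complex.norm_real, Real.norm_eq_abs]; exact abs_sin_le_one _)
    refine this.congr ?_
    refine fun x _ => ?_
    push_cast
    ring
  rw [fc_eq]
  congr 1
  rw [intervalIntegral.integral_congr (fun x _ => hint x),
    intervalIntegral.integral_sub hA (hB.const_mul Complex.I),
    intervalIntegral.integral_const_mul, intervalIntegral.integral_ofReal,
    intervalIntegral.integral_ofReal]
end



noncomputable section

lemma circleFourierCoeff_eq_fc {m : ℕ} (w : ℝ → EuclideanSpace ℝ (Fin m)) (n : ℤ) (i : Fin m) :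
    circleFourierCoeff w n i = fc (fun θ => ((w θ i : ℝ):ℂ)) n := (fc_eq _ n).symm

lemma cosCoeff_apply {m : ℕ} {u : ℝ → EuclideanSpace ℝ (Fin m)}
    (hu : MemLp u 2 (volume.restrict (Set.Ioc (0:ℝ) (2*π)))) (k : ℕ) (i : Fin m) :
    cosCoeff u k i = (1/(2*π)) * ∫ θ in (0:ℝ)..(2*π), Real.cos (k*θ) * u θ i := by
  have hI : IntervalIntegrable (fun θ => Real.cos (k*θ) • u θ) volume 0 (2*π) :=
    II_smul_vec hu _ (Real.continuous_cos.comp (by continuity)) 1 (fun x => abs_cos_le_one _)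
  have hproj := (EuclideanSpace.proj (𝕜 := ℝ) i).intervalIntegral_comp_comm hI
  calc cosCoeff u k i
      = (1/(2*π)) * (EuclideanSpace.proj (𝕜:=ℝ) i)
          (∫ θ in (0:ℝ)..(2*π), Real.cos (k*θ) • u θ) := rfl
    _ = (1/(2*π)) * ∫ θ in (0:ℝ)..(2*π),
          (EuclideanSpace.proj (𝕜:=ℝ) i) (Real.cos (k*θ) • u θ) := by rw [hproj]
    _ = (1/(2*π)) * ∫ θ in (0:ℝ)..(2*π), Real.cos (k*θ) * u θ i := rfl

lemma sinCoeff_apply {m : ℕ} {u : ℝ → EuclideanSpace ℝ (Fin m)}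
    (hu : MemLp u 2 (volume.restrict (Set.Ioc (0:ℝ) (2*π)))) (k : ℕ) (i : Fin m) :
    sinCoeff u k i = (1/(2*π)) * ∫ θ in (0:ℝ)..(2*π), Real.sin (k*θ) * u θ i := by
  have hI : IntervalIntegrable (fun θ => Real.sin (k*θ) • u θ) volume 0 (2*π) :=
    II_smul_vec hu _ (Real.continuous_sin.comp (by continuity)) 1 (fun x => abs_sin_le_one _)
  have hproj := (EuclideanSpace.proj (𝕜 := ℝ) i).intervalIntegral_comp_comm hI
  calc sinCoeff u k i
      = (1/(2*π)) * (EuclideanSpace.proj (𝕜:=ℝ) i)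
          (∫ θ in (0:ℝ)..(2*π), Real.sin (k*θ) • u θ) := rfl
    _ = (1/(2*π)) * ∫ θ in (0:ℝ)..(2*π),
          (EuclideanSpace.proj (𝕜:=ℝ) i) (Real.sin (k*θ) • u θ) := by rw [hproj]
    _ = (1/(2*π)) * ∫ θ in (0:ℝ)..(2*π), Real.sin (k*θ) * u θ i := rfl

lemma proj_int {m : ℕ} (i : Fin m) (c : ℝ → ℝ) (hc : Continuous c) (Cb : ℝ)
    (hbd : ∀ x, |c x| ≤ Cb) (w : ℝ → EuclideanSpace ℝ (Fin m))
    (hw : MemLp w 2 (volume.restrict (Set.Ioc (0:ℝ) (2*π)))) :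
    (∫ θ in (0:ℝ)..(2*π), c θ * w θ i)
      = (EuclideanSpace.proj (𝕜:=ℝ) i) (∫ θ in (0:ℝ)..(2*π), c θ • w θ) :=
  (EuclideanSpace.proj (𝕜:=ℝ) i).intervalIntegral_comp_comm (II_smul_vec hw c hc Cb hbd)

set_option maxHeartbeats 1000000 in
lemma fc_deriv {m : ℕ} {u u' : ℝ → EuclideanSpace ℝ (Fin m)}
    (hu2 : MemLp u 2 (volume.restrict (Set.Ioc (0:ℝ) (2*π))))
    (hu'2 : MemLp u' 2 (volume.restrict (Set.Ioc (0:ℝ) (2*π))))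
    (hweak : ∀ φ : ℝ → ℝ, ContDiff ℝ (⊤ : ℕ∞) φ → Function.Periodic φ (2 * π) →
      (∫ θ in (0:ℝ)..(2 * π), φ θ • u' θ) = -∫ θ in (0:ℝ)..(2 * π), deriv φ θ • u θ)
    (n : ℤ) (i : Fin m) :
    fc (fun θ => ((u' θ i : ℝ):ℂ)) n = Complex.I * n * fc (fun θ => ((u θ i : ℝ):ℂ)) n := by
  have hder_cos : ∀ θ:ℝ, deriv (fun θ => Real.cos ((n:ℝ)*θ)) θ = -Real.sin ((n:ℝ)*θ) * n := by
    intro θ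
    have h1 : HasDerivAt (fun θ : ℝ => (n:ℝ)*θ) (n:ℝ) θ := by
      simpa using (hasDerivAt_id θ).const_mul (n:ℝ)
    exact h1.cos.deriv
  have hder_sin : ∀ θ:ℝ, deriv (fun θ => Real.sin ((n:ℝ)*θ)) θ = Real.cos ((n:ℝ)*θ) * n := by
    intro θ
    have h1 : HasDerivAt (fun θ : ℝ => (n:ℝ)*θ) (n:ℝ) θ := by
      simpa using (hasDerivAt_id θ).const_mul (n:ℝ)
    exact h1.sin.deriv
  have hcd : ContDiff ℝ (⊤ : ℕ∞) (fun θ : ℝ => (n:ℝ)*θ) := contDiff_const.mul contDiff_id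
  have hper_cos : Function.Periodic (fun θ => Real.cos ((n:ℝ)*θ)) (2*π) := by
    intro x
    show Real.cos ((n:ℝ)*(x+2*π)) = Real.cos ((n:ℝ)*x)
    rw [mul_add]
    exact_mod_cast Real.cos_add_int_mul_two_pi _ n
  have hper_sin : Function.Periodic (fun θ => Real.sin ((n:ℝ)*θ)) (2*π) := by
    intro x
    show Real.sin ((n:ℝ)*(x+2*π)) = Real.sin ((n:ℝ)*x)
    rw [mul_add]
    exact_mod_cast Real.sin_add_int_mul_two_pi _ n
  have habs_sin : ∀ x:ℝ, |Real.sin ((n:ℝ)*x)| ≤ 1 := fun x => abs_sin_le_one _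
  have habs_cos : ∀ x:ℝ, |Real.cos ((n:ℝ)*x)| ≤ 1 := fun x => abs_cos_le_one _
  set C : ℝ := ∫ θ in (0:ℝ)..(2*π), Real.cos ((n:ℝ)*θ) * u θ i with hC
  set S : ℝ := ∫ θ in (0:ℝ)..(2*π), Real.sin ((n:ℝ)*θ) * u θ i with hS
  set C' : ℝ := ∫ θ in (0:ℝ)..(2*π), Real.cos ((n:ℝ)*θ) * u' θ i with hC'
  set S' : ℝ := ∫ θ in (0:ℝ)..(2*π), Real.sin ((n:ℝ)*θ) * u' θ i with hS'
  have hCeq : C' = n * S := by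
    have h1 := hweak (fun θ => Real.cos ((n:ℝ)*θ)) (Real.contDiff_cos.comp hcd) hper_cos
    simp only [hder_cos] at h1
    have h2 : C' = (EuclideanSpace.proj (𝕜:=ℝ) i)
        (∫ θ in (0:ℝ)..(2*π), Real.cos ((n:ℝ)*θ) • u' θ) :=
      proj_int i _ (Real.continuous_cos.comp (by continuity)) 1 habs_cos u' hu'2
    rw [h2, h1, map_neg]
    have h3 : (∫ θ in (0:ℝ)..(2*π), (-Real.sin ((n:ℝ)*θ) * (n:ℝ)) • u θ)
        = (-(n:ℝ)) • ∫ θ in (0:ℝ)..(2*π), Real.sin ((n:ℝ)*θ) • u θ := by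
      rw [← intervalIntegral.integral_smul]
      refine intervalIntegral.integral_congr fun x _ => ?_
      rw [smul_smul]
      congr 1
      ring
    rw [h3, _root_.map_smul]
    have h4 : S = (EuclideanSpace.proj (𝕜:=ℝ) i)
        (∫ θ in (0:ℝ)..(2*π), Real.sin ((n:ℝ)*θ) • u θ) :=
      proj_int i _ (Real.continuous_sin.comp (by continuity)) 1 habs_sin u hu2
    rw [← h4, smul_eq_mul]
    ring
  have hSeq : S' = -(n * C) := by
    have h1 := hweak (fun θ => Real.sin ((n:ℝ)*θ)) (Real.contDiff_sin.comp hcd) hper_sin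
    simp only [hder_sin] at h1
    have h2 : S' = (EuclideanSpace.proj (𝕜:=ℝ) i)
        (∫ θ in (0:ℝ)..(2*π), Real.sin ((n:ℝ)*θ) • u' θ) :=
      proj_int i _ (Real.continuous_sin.comp (by continuity)) 1 habs_sin u' hu'2
    rw [h2, h1, map_neg]
    have h3 : (∫ θ in (0:ℝ)..(2*π), (Real.cos ((n:ℝ)*θ) * (n:ℝ)) • u θ)
        = ((n:ℝ)) • ∫ θ in (0:ℝ)..(2*π), Real.cos ((n:ℝ)*θ) • u θ := by
      rw [← intervalIntegral.integral_smul]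
      refine intervalIntegral.integral_congr fun x _ => ?_
      rw [smul_smul]
      congr 1
      ring
    rw [h3, _root_.map_smul]
    have h4 : C = (EuclideanSpace.proj (𝕜:=ℝ) i)
        (∫ θ in (0:ℝ)..(2*π), Real.cos ((n:ℝ)*θ) • u θ) :=
      proj_int i _ (Real.continuous_cos.comp (by continuity)) 1 habs_cos u hu2
    rw [← h4, smul_eq_mul]
  rw [fc_split _ (memLp_comp_proj hu'2 i) n, fc_split _ (memLp_comp_proj hu2 i) n]
  rw [← hC, ← hS, ← hC', ← hS', hCeq, hSeq]
  push_cast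
  ring_nf
  rw [Complex.I_sq]
  ring

end

/-- **Fourth-order Fourier mode constraints.** Under the half-harmonicity conditions,
`|a₂|² - |b₂|² = (3/2)(b₁ · b₃ - a₁ · a₃)` and `a₂ · b₂ = -(3/4)(a₁ · b₃ + b₁ · a₃)`. -/
theorem fourth_fourier_mode_constraints {m : ℕ}
    (u u' v : ℝ → EuclideanSpace ℝ (Fin m))
    (hu_per : Function.Periodic u (2 * π))
    (hu'_per : Function.Periodic u' (2 * π))
    (hv_per : Function.Periodic v (2 * π))
    (hu2 : MemLp u 2 (volume.restrict (Set.Ioc (0:ℝ) (2 * π))))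
    (hu'2 : MemLp u' 2 (volume.restrict (Set.Ioc (0:ℝ) (2 * π))))
    (hv2 : MemLp v 2 (volume.restrict (Set.Ioc (0:ℝ) (2 * π))))
    (hweak : ∀ φ : ℝ → ℝ, ContDiff ℝ (⊤ : ℕ∞) φ → Function.Periodic φ (2 * π) →
      (∫ θ in (0:ℝ)..(2 * π), φ θ • u' θ) = -∫ θ in (0:ℝ)..(2 * π), deriv φ θ • u θ)
    (hhalf : ∀ (n : ℤ) (i : Fin m),
      circleFourierCoeff v n i = ((|n| : ℤ) : ℂ) * circleFourierCoeff u n i)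
    (horth : ∀ᵐ θ : ℝ, inner ℝ (u' θ) (v θ) = (0 : ℝ)) :
    ‖cosCoeff u 2‖ ^ 2 - ‖sinCoeff u 2‖ ^ 2
      = (3 / 2) * ((inner ℝ (sinCoeff u 1) (sinCoeff u 3) : ℝ)
          - (inner ℝ (cosCoeff u 1) (cosCoeff u 3) : ℝ)) ∧
    (inner ℝ (cosCoeff u 2) (sinCoeff u 2) : ℝ)
      = -(3 / 4) * ((inner ℝ (cosCoeff u 1) (sinCoeff u 3) : ℝ)
          + (inner ℝ (sinCoeff u 1) (cosCoeff u 3) : ℝ)) := by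
  classical
  set c : ℤ → Fin m → ℂ := fun n i => fc (fun θ => ((u θ i:ℝ):ℂ)) n with hc
  have hder : ∀ (n : ℤ) (i : Fin m), fc (fun θ => ((u' θ i:ℝ):ℂ)) n = Complex.I * n * c n i :=
    fun n i => fc_deriv hu2 hu'2 hweak n i
  have hvc : ∀ (n : ℤ) (i : Fin m), fc (fun θ => ((v θ i:ℝ):ℂ)) n = ((|n|:ℤ):ℂ) * c n i := by
    intro n i
    have h := hhalf n i
    rw [circleFourierCoeff_eq_fc, circleFourierCoeff_eq_fc] at h
    exact h
  set E4 : ℝ → ℂ := fun θ => Complex.exp (-((4:ℤ):ℂ) * θ * Complex.I) with hE4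
  have hE4cont : Continuous E4 := by
    apply Complex.continuous_exp.comp
    exact (continuous_const.mul Complex.continuous_ofReal).mul continuous_const
  have hE4bd : ∀ x:ℝ, ‖E4 x‖ ≤ 1 := by
    intro x
    rw [hE4]
    simp only [Complex.norm_exp]
    have : (-((4:ℤ):ℂ) * (x:ℂ) * Complex.I).re = 0 := by simp
    rw [this, Real.exp_zero]
  set f : Fin m → ℝ → ℂ := fun i θ => ((u' θ i:ℝ):ℂ) with hf
  set g : Fin m → ℝ → ℂ := fun i θ => E4 θ * ((v θ i:ℝ):ℂ) with hg
  have hfe : ∀ i, MemLp (f i) 2 (volume.restrict (Set.Ioc (0:ℝ) (2*π))) :=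
    fun i => memLp_comp_proj hu'2 i
  have hge : ∀ i, MemLp (g i) 2 (volume.restrict (Set.Ioc (0:ℝ) (2*π))) :=
    fun i => memLp_mul_bounded (memLp_comp_proj hv2 i) E4 hE4cont 1 hE4bd
  have hP : ∀ i, HasSum (fun n : ℤ => (starRingEnd ℂ) (fc (f i) n) * fc (g i) n)
      ((1/(2*π):ℂ) * ∫ x in Set.Ioc (0:ℝ) (2*π), (starRingEnd ℂ) (f i x) * g i x) :=
    fun i => parseval_hasSum (f i) (g i) (hfe i) (hge i)
  have hPt : HasSum (fun n : ℤ => ∑ i : Fin m, (starRingEnd ℂ) (fc (f i) n) * fc (g i) n)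
      (∑ i : Fin m, (1/(2*π):ℂ) * ∫ x in Set.Ioc (0:ℝ) (2*π),
        (starRingEnd ℂ) (f i x) * g i x) :=
    hasSum_sum (fun i _ => hP i)
  have hval : (∑ i : Fin m, (1/(2*π):ℂ) * ∫ x in Set.Ioc (0:ℝ) (2*π),
      (starRingEnd ℂ) (f i x) * g i x) = 0 := by
    have hint : ∀ i : Fin m, Integrable (fun x => (starRingEnd ℂ) (f i x) * g i x)
        (volume.restrict (Set.Ioc (0:ℝ) (2*π))) := by
      intro i
      have h1 : (fun x => (starRingEnd ℂ) (f i x) * g i x) = fun x => f i x * g i x := by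
        funext x
        rw [hf]
        simp [Complex.conj_ofReal]
      rw [h1]
      exact integrable_mul2 (hfe i) (hge i)
    rw [← Finset.mul_sum, ← integral_finset_sum _ (fun i _ => hint i)]
    have hz : (fun x => ∑ i : Fin m, (starRingEnd ℂ) (f i x) * g i x)
        =ᵐ[volume.restrict (Set.Ioc (0:ℝ) (2*π))] 0 := by
      have horth' : ∀ᵐ x ∂(volume.restrict (Set.Ioc (0:ℝ) (2*π))),
          inner ℝ (u' x) (v x) = (0:ℝ) := ae_restrict_of_ae horth
      filter_upwards [horth'] with x hx
      have hx2 : ∑ i : Fin m, u' x i * v x i = 0 := by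
        rw [PiLp.inner_apply] at hx
        simpa [RCLike.inner_apply, conj_trivial, mul_comm] using hx
      have hcalc : ∑ i : Fin m, (starRingEnd ℂ) (f i x) * g i x
          = E4 x * ((∑ i : Fin m, u' x i * v x i : ℝ):ℂ) := by
        rw [hf, hg]
        push_cast
        rw [Finset.mul_sum]
        refine Finset.sum_congr rfl fun i _ => ?_
        simp only [Complex.conj_ofReal]
        ring
      show ∑ i : Fin m, (starRingEnd ℂ) (f i x) * g i x = 0
      rw [hcalc, hx2]
      simp
    rw [integral_eq_zero_of_ae hz, mul_zero]
  rw [hval] at hPt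
  set D : ℤ → ℂ := fun k => ∑ i : Fin m, c k i * c (4-k) i with hD
  set w : ℤ → ℂ := fun k => Complex.I * k * ((|4-k|:ℤ):ℂ) * D k with hw
  have hterm : ∀ n : ℤ, (∑ i : Fin m, (starRingEnd ℂ) (fc (f i) n) * fc (g i) n) = w (-n) := by
    intro n
    have h1 : ∀ i, (starRingEnd ℂ) (fc (f i) n) = Complex.I * (-(n:ℂ)) * c (-n) i := by
      intro i
      rw [hf]
      rw [fc_conj_real (fun θ => u' θ i) n, hder (-n) i]
      push_cast
      ring
    have h2 : ∀ i, fc (g i) n = ((|n+4|:ℤ):ℂ) * c (n+4) i := by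
      intro i
      rw [hg]
      rw [fc_exp_mul (fun θ => ((v θ i:ℝ):ℂ)) n 4]
      exact hvc (n+4) i
    have h4n : (4:ℤ) - -n = n + 4 := by ring
    calc ∑ i : Fin m, (starRingEnd ℂ) (fc (f i) n) * fc (g i) n
        = ∑ i : Fin m, (Complex.I * (-(n:ℂ)) * c (-n) i) * (((|n+4|:ℤ):ℂ) * c (n+4) i) :=
          Finset.sum_congr rfl fun i _ => by rw [h1 i, h2 i]
      _ = w (-n) := by
          rw [hw]
          simp only [hD, h4n]
          rw [Finset.mul_sum]
          refine Finset.sum_congr rfl fun i _ => ?_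
          push_cast
          ring
  simp only [hterm] at hPt
  have hw0 : HasSum w 0 := by
    refine ((Equiv.neg ℤ).hasSum_iff).mp ?_
    exact hPt
  have hw4 : HasSum (fun n => w (4 - n)) 0 := by
    have h := ((Equiv.subLeft (4:ℤ)).hasSum_iff).mpr hw0
    exact h
  have hsum : HasSum (fun n => w n + w (4 - n)) 0 := by simpa using hw0.add hw4
  have hDD : ∀ k : ℤ, D (4-k) = D k := by
    intro k
    rw [hD]
    simp only []
    rw [show (4:ℤ) - (4 - k) = k by ring]
    exact Finset.sum_congr rfl fun i _ => mul_comm _ _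
  have hvan : ∀ n : ℤ, n ∉ ({1,2,3} : Finset ℤ) → w n + w (4-n) = 0 := by
    intro n hn
    have hcase : n ≤ 0 ∨ 4 ≤ n := by
      simp only [Finset.mem_insert, Finset.mem_singleton] at hn
      omega
    have hwt : (n * |4-n| + (4-n) * |n| : ℤ) = 0 := by
      rcases hcase with h | h
      · rw [abs_of_nonpos h, abs_of_nonneg (by omega : (0:ℤ) ≤ 4 - n)]; ring
      · rw [abs_of_nonneg (by omega : (0:ℤ) ≤ n), abs_of_nonpos (by omega : (4:ℤ)-n ≤ 0)]; ring
    have hexp : w n + w (4-n) = Complex.I * ((n * |4-n| + (4-n) * |n| : ℤ):ℂ) * D n := by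
      rw [hw]
      simp only []
      rw [hDD n, show (4:ℤ) - (4-n) = n by ring]
      push_cast
      ring
    rw [hexp, hwt]
    simp
  have h123 : w 1 + w (4-1) + (w 2 + w (4-2) + (w 3 + w (4-3))) = 0 := by
    have hfin := hasSum_sum_of_ne_finset_zero (L := SummationFilter.unconditional ℤ) (s := ({1,2,3} : Finset ℤ)) hvan
    have huniq := hfin.unique hsum
    rw [← huniq]
    rw [show ({1,2,3} : Finset ℤ) = insert 1 (insert 2 {3}) from rfl]
    rw [Finset.sum_insert (by decide), Finset.sum_insert (by decide), Finset.sum_singleton]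
  have hD3 : D 3 = D 1 := by
    have h := hDD 1
    norm_num at h
    exact h
  have hkey : 2 * D 2 + 3 * D 1 = 0 := by
    have e123 : Complex.I * 4 * (2 * D 2 + 3 * D 1) = 0 := by
      rw [← h123, hw]
      norm_num
      rw [hD3]
      ring
    rcases mul_eq_zero.mp e123 with h | h
    · exfalso
      rcases mul_eq_zero.mp h with h' | h'
      · exact Complex.I_ne_zero h'
      · norm_num at h'
    · exact h
  have hcoord : ∀ (k : ℕ) (i : Fin m), c (k:ℤ) i
      = ((cosCoeff u k i : ℝ):ℂ) - ((sinCoeff u k i : ℝ):ℂ) * Complex.I := by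
    intro k i
    rw [hc]
    simp only []
    rw [fc_split (fun θ => u θ i) (memLp_comp_proj hu2 i) (k:ℤ),
      cosCoeff_apply hu2 k i, sinCoeff_apply hu2 k i]
    simp only [Int.cast_natCast]
    push_cast
    ring
  have hc1 : ∀ i, c 1 i = ((cosCoeff u 1 i : ℝ):ℂ) - ((sinCoeff u 1 i : ℝ):ℂ) * Complex.I := by
    intro i
    have h := hcoord 1 i
    norm_num at h
    exact h
  have hc2 : ∀ i, c 2 i = ((cosCoeff u 2 i : ℝ):ℂ) - ((sinCoeff u 2 i : ℝ):ℂ) * Complex.I := by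
    intro i
    have h := hcoord 2 i
    norm_num at h
    exact h
  have hc3 : ∀ i, c 3 i = ((cosCoeff u 3 i : ℝ):ℂ) - ((sinCoeff u 3 i : ℝ):ℂ) * Complex.I := by
    intro i
    have h := hcoord 3 i
    norm_num at h
    exact h
  have hD1e : D 1 = ∑ i : Fin m, c 1 i * c 3 i := by
    rw [hD]
    simp only []
    norm_num
  have hD2e : D 2 = ∑ i : Fin m, c 2 i * c 2 i := by
    rw [hD]
    simp only []
    norm_num
  have hD1re : (D 1).re = (inner ℝ (cosCoeff u 1) (cosCoeff u 3) : ℝ)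
      - (inner ℝ (sinCoeff u 1) (sinCoeff u 3) : ℝ) := by
    rw [hD1e, Complex.re_sum, PiLp.inner_apply, PiLp.inner_apply, ← Finset.sum_sub_distrib]
    refine Finset.sum_congr rfl fun i _ => ?_
    rw [hc1 i, hc3 i]
    simp [Complex.mul_re, RCLike.inner_apply, conj_trivial]
    ring
  have hD1im : (D 1).im = -((inner ℝ (cosCoeff u 1) (sinCoeff u 3) : ℝ)
      + (inner ℝ (sinCoeff u 1) (cosCoeff u 3) : ℝ)) := by
    rw [hD1e, Complex.im_sum, PiLp.inner_apply, PiLp.inner_apply]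
    rw [neg_add, ← Finset.sum_neg_distrib, ← Finset.sum_neg_distrib, ← Finset.sum_add_distrib]
    refine Finset.sum_congr rfl fun i _ => ?_
    rw [hc1 i, hc3 i]
    simp [Complex.mul_im, RCLike.inner_apply, conj_trivial]
    ring
  have hD2re : (D 2).re = (inner ℝ (cosCoeff u 2) (cosCoeff u 2) : ℝ)
      - (inner ℝ (sinCoeff u 2) (sinCoeff u 2) : ℝ) := by
    rw [hD2e, Complex.re_sum, PiLp.inner_apply, PiLp.inner_apply, ← Finset.sum_sub_distrib]
    refine Finset.sum_congr rfl fun i _ => ?_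
    rw [hc2 i]
    simp [Complex.mul_re, RCLike.inner_apply, conj_trivial]
    ring
  have hD2im : (D 2).im = -(2 * (inner ℝ (cosCoeff u 2) (sinCoeff u 2) : ℝ)) := by
    rw [hD2e, Complex.im_sum, PiLp.inner_apply]
    rw [Finset.mul_sum, ← Finset.sum_neg_distrib]
    refine Finset.sum_congr rfl fun i _ => ?_
    rw [hc2 i]
    simp [Complex.mul_im, RCLike.inner_apply, conj_trivial]
    ring
  have hre := congrArg Complex.re hkey
  have him := congrArg Complex.im hkey
  simp only [Complex.add_re, Complex.mul_re, Complex.add_im, Complex.mul_im, Complex.re_ofNat,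
    Complex.im_ofNat, Complex.zero_re, Complex.zero_im, zero_mul, mul_zero, sub_zero,
    add_zero, zero_add] at hre him
  rw [hD2re, hD1re] at hre
  rw [hD2im, hD1im] at him
  constructor
  · rw [← real_inner_self_eq_norm_sq, ← real_inner_self_eq_norm_sq]
    linarith
  · linarith
end

section
/- (Pohozaev identity on circles for holomorphic vector fields.) Let u : ℝ² → ℝ^m be twice continuously differentiable and satisfy (∂u/∂x_i) · Δu = 0 almost everywhere in ℝ² for i = 1, 2. Let X = X₁ + iX₂ : ℂ → ℂ be an entire holomorphic function identified with the vector field (X₁, X₂) on ℝ². Then for every x₀ ∈ ℝ² and every r > 0: 2∫_{∂B(x₀,r)} ((ν·∇)u) · ((X·∇)u) dσ = ∫_{∂B(x₀,r)} (X · ν) |∇u|² dσ, where ν(x) = (x - x₀)/r is the outward unit normal; equivalently, parametrizing ∂B(x₀,r) by θ ↦ x₀ + r e^{iθ}, 2∫₀^{2π} ((cos θ ∂₁u + sin θ ∂₂u) · (X₁ ∂₁u + X₂ ∂₂u))(x₀ + re^{iθ}) r dθ = ∫₀^{2π} ((X₁ cos θ + X₂ sin θ)|∇u|²)(x₀ +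 re^{iθ}) r dθ. -/
open Real MeasureTheory intervalIntegral

/-- First partial derivative `∂₁u` of a map `u : ℝ² → ℝ^m`. -/
noncomputable def pd1 {m : ℕ} (u : ℝ × ℝ → EuclideanSpace ℝ (Fin m)) (x : ℝ × ℝ) :
    EuclideanSpace ℝ (Fin m) :=
  fderiv ℝ u x (1, 0)

/-- Second partial derivative `∂₂u` of a map `u : ℝ² → ℝ^m`. -/
noncomputable def pd2 {m : ℕ} (u : ℝ × ℝ → EuclideanSpace ℝ (Fin m)) (x : ℝ × ℝ) :
    EuclideanSpace ℝ (Fin m) :=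
  fderiv ℝ u x (0, 1)

/-- The componentwise Laplacian `Δu = ∂₁₁u + ∂₂₂u` of a map `u : ℝ² → ℝ^m`. -/
noncomputable def lap2 {m : ℕ} (u : ℝ × ℝ → EuclideanSpace ℝ (Fin m)) (x : ℝ × ℝ) :
    EuclideanSpace ℝ (Fin m) :=
  fderiv ℝ (pd1 u) x (1, 0) + fderiv ℝ (pd2 u) x (0, 1)

/-!
The Hopf differential `φ = |∂₁u|² - |∂₂u|² - 2i ∂₁u·∂₂u` satisfies
`∂̄φ = ∂₁u·Δu - i ∂₂u·Δu` (by symmetry of the second derivative), so the hypothesis, which holds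
everywhere by continuity, makes `φ` entire. By Cauchy's theorem `∮ Xφ dz = 0` on every circle.
With `z = x₀ + r e^{iθ}`, `dz = i r e^{iθ} dθ`, so the imaginary part of this integral is
`r ∫ Re(e^{iθ} X φ) dθ`, and pointwise `Re(ν X φ) = 2 (ν·∇u)·(X·∇u) - (X·ν)|∇u|²`.
-/

open Complex in
theorem differentiableAt_complex_of_cauchyRiemann {P Q : ℝ × ℝ → ℝ} {z : ℂ}
    (hP : DifferentiableAt ℝ P (z.re, z.im)) (hQ : DifferentiableAt ℝ Q (z.re, z.im))
    (h₁ : fderiv ℝ P (z.re, z.im) (1, 0) = fderiv ℝ Q (z.re, z.im) (0, 1))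
    (h₂ : fderiv ℝ P (z.re, z.im) (0, 1) = -fderiv ℝ Q (z.re, z.im) (1, 0)) :
    DifferentiableAt ℂ (fun w : ℂ => (⟨P (w.re, w.im), Q (w.re, w.im)⟩ : ℂ)) z := by
  have hPQ : HasFDerivAt (fun w : ℂ => (P (w.re, w.im), Q (w.re, w.im)))
      (((fderiv ℝ P (z.re, z.im)).prod (fderiv ℝ Q (z.re, z.im))) ∘L
        equivRealProdCLM.toContinuousLinearMap) z :=
    (hP.hasFDerivAt.prodMk hQ.hasFDerivAt).comp z equivRealProdCLM.hasFDerivAt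
  have hf : HasFDerivAt (fun w : ℂ => (⟨P (w.re, w.im), Q (w.re, w.im)⟩ : ℂ)) _ z :=
    equivRealProdCLM.symm.hasFDerivAt.comp z hPQ
  rw [differentiableAt_complex_iff_differentiableAt_real, hf.fderiv]
  refine ⟨hf.differentiableAt, ?_⟩
  apply Complex.ext <;> simp [h₁, h₂]

theorem integral_re_exp_mul_eq_zero {g : ℂ → ℂ} (hg : Differentiable ℂ g) (c : ℂ) {R : ℝ}
    (hR : 0 < R) :
    ∫ θ in (0:ℝ)..(2 * π), (Complex.exp (θ * Complex.I) * g (circleMap c R θ)).re = 0 := by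
  have hcauchy : ∮ z in C(c, R), g z = 0 := hg.diffContOnCl.circleIntegral_eq_zero hR.le
  have hint : ∫ θ in (0:ℝ)..(2 * π), Complex.exp (θ * Complex.I) * g (circleMap c R θ) = 0 := by
    simp only [circleIntegral, deriv_circleMap, circleMap_zero, smul_eq_mul] at hcauchy
    have hfactor : (R * Complex.I) * ∫ θ in (0:ℝ)..(2 * π),
        Complex.exp (θ * Complex.I) * g (circleMap c R θ) = 0 := by
      rw [← intervalIntegral.integral_const_mul, ← hcauchy]
      congr 1 with θ
      ring
    exact (mul_eq_zero.1 hfactor).resolve_left (by simp [hR.ne'])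
  have hcont : Continuous fun θ : ℝ => Complex.exp (θ * Complex.I) * g (circleMap c R θ) := by
    have hgc := hg.continuous
    fun_prop
  simpa [hint] using
    Complex.reCLM.intervalIntegral_comp_comm (hcont.intervalIntegrable (μ := volume) 0 (2 * π))

theorem circleMap_eq_add_mul_I (x₀ : ℝ × ℝ) (r θ : ℝ) :
    circleMap (x₀.1 + x₀.2 * Complex.I) r θ
      = (x₀.1 + r * Real.cos θ) + (x₀.2 + r * Real.sin θ) * Complex.I := by
  apply Complex.ext <;> simp [circleMap, Complex.cos_ofReal_re, Complex.sin_ofReal_re]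

theorem fderiv_clm_apply_const_apply {𝕜 E F G : Type*} [NontriviallyNormedField 𝕜]
    [NormedAddCommGroup E] [NormedSpace 𝕜 E] [NormedAddCommGroup F] [NormedSpace 𝕜 F]
    [NormedAddCommGroup G] [NormedSpace 𝕜 G] {c : E → F →L[𝕜] G} {x : E}
    (hc : DifferentiableAt 𝕜 c x) (v : F) (w : E) :
    fderiv 𝕜 (fun y => c y v) x w = fderiv 𝕜 c x w v := by
  simp [fderiv_clm_apply hc (differentiableAt_const v)]

theorem ContDiff.differentiable_fderiv {E F : Type*} [NormedAddCommGroup E] [NormedSpace ℝ E]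
    [NormedAddCommGroup F] [NormedSpace ℝ F] {f : E → F} (hf : ContDiff ℝ 2 f) :
    Differentiable ℝ (fderiv ℝ f) :=
  (hf.fderiv_right le_rfl).differentiable one_ne_zero

section HopfForm

variable {E : Type*} [NormedAddCommGroup E] [InnerProductSpace ℝ E]

noncomputable def hopfForm (a b : E) : ℂ :=
  ⟨‖a‖ ^ 2 - ‖b‖ ^ 2, -(2 * inner ℝ a b)⟩

theorem re_mul_hopfForm (a b : E) (ν X : ℂ) :
    (ν * X * hopfForm a b).re = 2 * inner ℝ (ν.re • a + ν.im • b) (X.re • a + X.im • b)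
      - (X.re * ν.re + X.im * ν.im) * (‖a‖ ^ 2 + ‖b‖ ^ 2) := by
  simp only [hopfForm, Complex.mul_re, Complex.mul_im, inner_add_left, inner_add_right,
    real_inner_smul_left, real_inner_smul_right, real_inner_self_eq_norm_sq, real_inner_comm a b]
  ring

end HopfForm

section SecondDerivatives

variable {m : ℕ} {u : ℝ × ℝ → EuclideanSpace ℝ (Fin m)}

theorem differentiable_pd1 (hu : ContDiff ℝ 2 u) : Differentiable ℝ (pd1 u) :=
  fun x => (hu.differentiable_fderiv x).clm_apply (differentiableAt_const _)

theorem differentiable_pd2 (hu : ContDiff ℝ 2 u) : Differentiable ℝ (pd2 u) :=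
  fun x => (hu.differentiable_fderiv x).clm_apply (differentiableAt_const _)

theorem fderiv_pd1_apply (hu : ContDiff ℝ 2 u) (x w : ℝ × ℝ) :
    fderiv ℝ (pd1 u) x w = fderiv ℝ (fderiv ℝ u) x w (1, 0) :=
  fderiv_clm_apply_const_apply (hu.differentiable_fderiv x) _ w

theorem fderiv_pd2_apply (hu : ContDiff ℝ 2 u) (x w : ℝ × ℝ) :
    fderiv ℝ (pd2 u) x w = fderiv ℝ (fderiv ℝ u) x w (0, 1) :=
  fderiv_clm_apply_const_apply (hu.differentiable_fderiv x) _ w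

theorem lap2_eq (hu : ContDiff ℝ 2 u) (x : ℝ × ℝ) :
    lap2 u x = fderiv ℝ (fderiv ℝ u) x (1, 0) (1, 0) + fderiv ℝ (fderiv ℝ u) x (0, 1) (0, 1) := by
  rw [lap2, fderiv_pd1_apply hu, fderiv_pd2_apply hu]

theorem continuous_lap2 (hu : ContDiff ℝ 2 u) : Continuous (lap2 u) := by
  have hD : Continuous (fderiv ℝ (fderiv ℝ u)) :=
    (hu.fderiv_right le_rfl).continuous_fderiv one_ne_zero
  simp only [funext (lap2_eq hu)]
  fun_prop

theorem inner_pd_lap2_eq_zero_of_ae (hu : ContDiff ℝ 2 u)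
    (heq : ∀ᵐ x : ℝ × ℝ,
      (inner ℝ (pd1 u x) (lap2 u x) : ℝ) = 0 ∧ (inner ℝ (pd2 u x) (lap2 u x) : ℝ) = 0)
    (x : ℝ × ℝ) : inner ℝ (pd1 u x) (lap2 u x) = 0 ∧ inner ℝ (pd2 u x) (lap2 u x) = 0 := by
  have hpd1 := (differentiable_pd1 hu).continuous
  have hpd2 := (differentiable_pd2 hu).continuous
  have hΔ := continuous_lap2 hu
  have hcont : Continuous fun y =>
      (inner ℝ (pd1 u y) (lap2 u y), inner ℝ (pd2 u y) (lap2 u y)) := by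
    fun_prop
  have hzero := (hcont.ae_eq_iff_eq volume (continuous_const (y := ((0 : ℝ), (0 : ℝ))))).1
    (heq.mono fun y hy => Prod.ext hy.1 hy.2)
  exact Prod.ext_iff.1 (congrFun hzero x)

end SecondDerivatives

section HopfDifferential

variable {m : ℕ} {u : ℝ × ℝ → EuclideanSpace ℝ (Fin m)}

noncomputable def hopfRe (u : ℝ × ℝ → EuclideanSpace ℝ (Fin m)) (x : ℝ × ℝ) : ℝ :=
  (hopfForm (pd1 u x) (pd2 u x)).re

noncomputable def hopfIm (u : ℝ × ℝ → EuclideanSpace ℝ (Fin m)) (x : ℝ × ℝ) : ℝ :=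
  (hopfForm (pd1 u x) (pd2 u x)).im

noncomputable def hopfDifferential (u : ℝ × ℝ → EuclideanSpace ℝ (Fin m)) (z : ℂ) : ℂ :=
  hopfForm (pd1 u (z.re, z.im)) (pd2 u (z.re, z.im))

theorem differentiable_hopfRe (hu : ContDiff ℝ 2 u) : Differentiable ℝ (hopfRe u) :=
  ((differentiable_pd1 hu).norm_sq ℝ).sub ((differentiable_pd2 hu).norm_sq ℝ)

theorem differentiable_hopfIm (hu : ContDiff ℝ 2 u) : Differentiable ℝ (hopfIm u) :=
  (((differentiable_pd1 hu).inner ℝ (differentiable_pd2 hu)).const_mul 2).neg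

theorem fderiv_hopfRe_apply (hu : ContDiff ℝ 2 u) (x w : ℝ × ℝ) :
    fderiv ℝ (hopfRe u) x w = 2 * (inner ℝ (pd1 u x) (fderiv ℝ (fderiv ℝ u) x w (1, 0))
      - inner ℝ (pd2 u x) (fderiv ℝ (fderiv ℝ u) x w (0, 1))) := by
  have h : HasFDerivAt (hopfRe u) _ x :=
    (differentiable_pd1 hu x).hasFDerivAt.norm_sq.sub (differentiable_pd2 hu x).hasFDerivAt.norm_sq
  rw [h.fderiv]
  simp only [sub_apply, smul_apply,
    ContinuousLinearMap.comp_apply, coe_innerSL_apply, fderiv_pd1_apply hu, fderiv_pd2_apply hu]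
  ring

theorem fderiv_hopfIm_apply (hu : ContDiff ℝ 2 u) (x w : ℝ × ℝ) :
    fderiv ℝ (hopfIm u) x w = -(2 * (inner ℝ (pd1 u x) (fderiv ℝ (fderiv ℝ u) x w (0, 1))
      + inner ℝ (fderiv ℝ (fderiv ℝ u) x w (1, 0)) (pd2 u x))) := by
  have h : HasFDerivAt (hopfIm u) _ x :=
    (((differentiable_pd1 hu x).hasFDerivAt.inner ℝ
      (differentiable_pd2 hu x).hasFDerivAt).const_mul 2).neg
  rw [h.fderiv]
  simp only [neg_apply, smul_apply,
    ContinuousLinearMap.comp_apply, ContinuousLinearMap.prod_apply, fderivInnerCLM_apply,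
    fderiv_pd1_apply hu, fderiv_pd2_apply hu, smul_eq_mul]

theorem fderiv_hopfRe_sub_fderiv_hopfIm (hu : ContDiff ℝ 2 u) (x : ℝ × ℝ) :
    fderiv ℝ (hopfRe u) x (1, 0) - fderiv ℝ (hopfIm u) x (0, 1)
      = 2 * inner ℝ (pd1 u x) (lap2 u x) := by
  have hsymm := (hu.contDiffAt (x := x)).isSymmSndFDerivAt (by simp) (1, 0) (0, 1)
  rw [fderiv_hopfRe_apply hu, fderiv_hopfIm_apply hu, lap2_eq hu, inner_add_right, ← hsymm,
    real_inner_comm (pd2 u x)]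
  ring

theorem fderiv_hopfRe_add_fderiv_hopfIm (hu : ContDiff ℝ 2 u) (x : ℝ × ℝ) :
    fderiv ℝ (hopfRe u) x (0, 1) + fderiv ℝ (hopfIm u) x (1, 0)
      = -(2 * inner ℝ (pd2 u x) (lap2 u x)) := by
  have hsymm := (hu.contDiffAt (x := x)).isSymmSndFDerivAt (by simp) (1, 0) (0, 1)
  rw [fderiv_hopfRe_apply hu, fderiv_hopfIm_apply hu, lap2_eq hu, inner_add_right, ← hsymm,
    real_inner_comm (pd2 u x)]
  ring

theorem differentiable_hopfDifferential (hu : ContDiff ℝ 2 u)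
    (h : ∀ x, inner ℝ (pd1 u x) (lap2 u x) = 0 ∧ inner ℝ (pd2 u x) (lap2 u x) = 0) :
    Differentiable ℂ (hopfDifferential u) := fun z =>
  differentiableAt_complex_of_cauchyRiemann (differentiable_hopfRe hu _)
    (differentiable_hopfIm hu _)
    (by linarith [fderiv_hopfRe_sub_fderiv_hopfIm hu (z.re, z.im), (h (z.re, z.im)).1])
    (by linarith [fderiv_hopfRe_add_fderiv_hopfIm hu (z.re, z.im), (h (z.re, z.im)).2])

end HopfDifferential

/-- **Pohozaev identity on circles for holomorphic vector fields.** Let `u : ℝ² → ℝ^m` be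
`C²` with `∂ᵢu · Δu = 0` a.e. for `i = 1,2`, and let `X = X₁ + iX₂ : ℂ → ℂ` be entire,
identified with the vector field `(X₁, X₂)`. Then for every `x₀ ∈ ℝ²` and `r > 0`,
parametrizing `∂B(x₀,r)` by `θ ↦ x₀ + r e^{iθ}`,
`2 ∫₀^{2π} ((ν·∇)u) · ((X·∇)u) r dθ = ∫₀^{2π} (X·ν) |∇u|² r dθ`. -/
theorem pohozaev_on_circles_holomorphic {m : ℕ} (u : ℝ × ℝ → EuclideanSpace ℝ (Fin m))
    (hu : ContDiff ℝ 2 u)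
    (heq : ∀ᵐ x : ℝ × ℝ,
      (inner ℝ (pd1 u x) (lap2 u x) : ℝ) = 0 ∧ (inner ℝ (pd2 u x) (lap2 u x) : ℝ) = 0)
    (X : ℂ → ℂ) (hX : Differentiable ℂ X) :
    ∀ (x₀ : ℝ × ℝ) (r : ℝ), 0 < r →
      2 * ∫ θ in (0:ℝ)..(2 * π),
          (inner ℝ (Real.cos θ • pd1 u (x₀.1 + r * Real.cos θ, x₀.2 + r * Real.sin θ)
                + Real.sin θ • pd2 u (x₀.1 + r * Real.cos θ, x₀.2 + r * Real.sin θ))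
              ((X ((x₀.1 + r * Real.cos θ) + (x₀.2 + r * Real.sin θ) * Complex.I)).re •
                  pd1 u (x₀.1 + r * Real.cos θ, x₀.2 + r * Real.sin θ)
                + (X ((x₀.1 + r * Real.cos θ) + (x₀.2 + r * Real.sin θ) * Complex.I)).im •
                  pd2 u (x₀.1 + r * Real.cos θ, x₀.2 + r * Real.sin θ)) : ℝ) * r
        = ∫ θ in (0:ℝ)..(2 * π),
            ((X ((x₀.1 + r * Real.cos θ) + (x₀.2 + r * Real.sin θ) * Complex.I)).re * Real.cos θ
              + (X ((x₀.1 + r * Real.cos θ) + (x₀.2 + r * Real.sin θ) * Complex.I)).im *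
                Real.sin θ) *
              (‖pd1 u (x₀.1 + r * Real.cos θ, x₀.2 + r * Real.sin θ)‖ ^ 2
                + ‖pd2 u (x₀.1 + r * Real.cos θ, x₀.2 + r * Real.sin θ)‖ ^ 2) * r := by
  intro x₀ r hr
  have hφ := differentiable_hopfDifferential hu (inner_pd_lap2_eq_zero_of_ae hu heq)
  have hcauchy := congrArg (r * ·)
    (integral_re_exp_mul_eq_zero (hX.mul hφ) (x₀.1 + x₀.2 * Complex.I) hr)
  simp only [mul_zero, ← intervalIntegral.integral_const_mul] at hcauchy
  have hpd1 := (differentiable_pd1 hu).continuous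
  have hpd2 := (differentiable_pd2 hu).continuous
  have hXc := hX.continuous
  rw [← sub_eq_zero, ← intervalIntegral.integral_const_mul,
    ← intervalIntegral.integral_sub (by apply Continuous.intervalIntegrable; fun_prop)
      (by apply Continuous.intervalIntegrable; fun_prop)]
  refine (intervalIntegral.integral_congr fun θ _ => ?_).trans hcauchy
  rw [Pi.mul_apply, circleMap_eq_add_mul_I, ← mul_assoc (Complex.exp _), hopfDifferential,
    re_mul_hopfForm]
  simp only [Complex.exp_ofReal_mul_I_re, Complex.exp_ofReal_mul_I_im, Complex.add_re,
    Complex.add_im, Complex.mul_re, Complex.mul_im, Complex.ofReal_re, Complex.ofReal_im,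
    Complex.I_re, Complex.I_im, mul_zero, zero_mul, mul_one, sub_self, sub_zero, add_zero, zero_add]
  ring
end
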